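/- arXiv:2601.03179 — 2 statements merged into one kernel-verified Lean document; each statement's English description precedes it below -/
import Mathlib

section
/- Let B be a finite-dimensional local Artinian k-algebra over a field k of characteristic zero (or characteristic larger than the k-dimension of B), graded with maximal ideal generated in a single fixed positive degree. Then every k-derivation δ: B → B of negative degree is zero. -/
/-- Let `B` be a finite-dimensional graded local Artinian `k`-algebra
with `B₀ = k·1` and maximal ideal generated by the single degree-`d` piece (`d > 0`).
If `char k = 0` or `char k > dim_k B`, then every `k`-derivation `δ : B → B` of
negative degree (i.e. of degree `-e` with `e > 0`, mapping `B_i` into `B_{i-e}`,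
and killing `B_i` for `i < e`) is zero. -/
theorem stmt2 (k B : Type*) [Field k] [CommRing B] [Algebra k B]
    [FiniteDimensional k B] [IsLocalRing B]
    (𝒜 : ℕ → Submodule k B) [GradedAlgebra 𝒜]
    (hB0 : 𝒜 0 = Submodule.span k {(1 : B)})
    (d : ℕ) (hd : 0 < d)
    (hmax : IsLocalRing.maximalIdeal B = Ideal.span (𝒜 d : Set B))
    (hchar : ringChar k = 0 ∨ Module.finrank k B < ringChar k)
    (δ : Derivation k B B) (e : ℕ) (he : 0 < e)
    (hdeg : ∀ (i : ℕ) (x : B), x ∈ 𝒜 i →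
      (e ≤ i → δ x ∈ 𝒜 (i - e)) ∧ (i < e → δ x = 0)) :
    δ = 0 := by
  classical
  -- an element lying in two distinct graded pieces is zero
  have hdeg0 : ∀ {a b : ℕ} {v : B}, v ∈ 𝒜 a → v ∈ 𝒜 b → a ≠ b → v = 0 := by
    intro a b v ha hb hab
    by_contra h0
    exact hab (DirectSum.degree_eq_of_mem_mem 𝒜 ha hb h0)
  -- the product `𝒜 0 * 𝒜 d` lands in `𝒜 d`
  have hQ0 : (𝒜 0 * 𝒜 d : Submodule k B) ≤ 𝒜 d := by
    refine Submodule.mul_le.mpr fun z hz y hy => ?_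
    simpa using SetLike.mul_mem_graded hz hy
  -- Claim C : each homogeneous component of an element of `Ideal.span (𝒜 d)`
  -- lies in `𝒜 (n - d) * 𝒜 d`.
  have claimC : ∀ x ∈ Ideal.span ((𝒜 d : Set B)), ∀ n : ℕ,
      (DirectSum.decompose 𝒜 x n : B) ∈ (𝒜 (n - d) * 𝒜 d : Submodule k B) := by
    intro x hx
    refine Submodule.span_induction ?_ ?_ ?_ ?_ hx
    · intro y hy n
      rcases eq_or_ne n d with rfl | hne
      · rw [DirectSum.decompose_of_mem_same 𝒜 hy, ← one_mul y]
        have h1 : (1 : B) ∈ 𝒜 (n - n) := by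
          rw [Nat.sub_self]; exact SetLike.one_mem_graded _
        exact Submodule.mul_mem_mul h1 hy
      · rw [DirectSum.decompose_of_mem_ne 𝒜 hy hne.symm]
        exact zero_mem _
    · intro n; simp
    · intro a b _ _ iha ihb n
      rw [DirectSum.decompose_add, DirectSum.add_apply, Submodule.coe_add]
      exact add_mem (iha n) (ihb n)
    · intro a x _ ih n
      rw [smul_eq_mul, ← DirectSum.sum_support_decompose 𝒜 a, Finset.sum_mul, DirectSum.decompose_sum, DFinsupp.finset_sum_apply,
        AddSubmonoidClass.coe_finset_sum]
      refine Submodule.sum_mem _ fun m _ => ?_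
      by_cases hmn : m ≤ n
      · rw [DirectSum.coe_decompose_mul_of_left_mem_of_le 𝒜 (SetLike.coe_mem ((DirectSum.decompose 𝒜 a) m)) hmn]
        by_cases hdnm : d ≤ n - m
        · have hw := ih (n - m)
          refine Submodule.mul_induction_on hw ?_ ?_
          · intro z hz y hy
            rw [← mul_assoc]
            have hmem : ((DirectSum.decompose 𝒜 a m : B) * z) ∈ 𝒜 (m + (n - m - d)) :=
              SetLike.mul_mem_graded (SetLike.coe_mem _) hz
            have harith : m + (n - m - d) = n - d := by omega
            rw [harith] at hmem
            exact Submodule.mul_mem_mul hmem hy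
          · intro w1 w2 h1 h2
            rw [mul_add]
            exact add_mem h1 h2
        · have hz : (DirectSum.decompose 𝒜 x (n - m) : B) = 0 := by
            have h1 : (DirectSum.decompose 𝒜 x (n - m) : B) ∈ 𝒜 d := by
              have h0 : n - m - d = 0 := by omega
              have := ih (n - m)
              rw [h0] at this
              exact hQ0 this
            exact hdeg0 (SetLike.coe_mem _) h1 (by omega)
          rw [hz, mul_zero]
          exact zero_mem _
      · rw [DirectSum.coe_decompose_mul_of_left_mem_of_not_le 𝒜 (SetLike.coe_mem ((DirectSum.decompose 𝒜 a) m)) hmn]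
        exact zero_mem _
  -- positive-degree homogeneous elements lie in the maximal ideal
  have hpos : ∀ n : ℕ, n ≠ 0 → ∀ x ∈ 𝒜 n, x ∈ Ideal.span ((𝒜 d : Set B)) := by
    intro n hn x hx
    rw [← hmax]
    refine IsLocalRing.le_maximalIdeal (J := RingHom.ker (GradedRing.projZeroRingHom 𝒜)) ?_ ?_
    · intro htop
      have h1 : (1 : B) ∈ RingHom.ker (GradedRing.projZeroRingHom 𝒜) := by
        rw [htop]; trivial
      rw [RingHom.mem_ker, map_one] at h1
      exact one_ne_zero h1
    · rw [RingHom.mem_ker, GradedRing.projZeroRingHom_apply]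
      exact DirectSum.decompose_of_mem_ne 𝒜 hx hn
  -- graded pieces in degrees strictly between 0 and d vanish
  have hsmall : ∀ n : ℕ, 0 < n → n < d → ∀ x ∈ 𝒜 n, x = 0 := by
    intro n h0 h1 x hx
    have hq := claimC x (hpos n (by omega) x hx) n
    rw [DirectSum.decompose_of_mem_same 𝒜 hx] at hq
    have hnd : n - d = 0 := by omega
    rw [hnd] at hq
    exact hdeg0 hx (hQ0 hq) (by omega)
  -- the main induction : δ vanishes on each homogeneous component
  have key : ∀ n : ℕ, ∀ x ∈ 𝒜 n, δ x = 0 := by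
    intro n
    induction n using Nat.strong_induction_on with
    | _ n IH =>
    intro x hx
    rcases lt_or_ge n e with hne | hen
    · exact (hdeg n x hx).2 hne
    have hn0 : 0 < n := lt_of_lt_of_le he hen
    rcases lt_trichotomy n d with h1 | h2 | h3
    · rw [hsmall n hn0 h1 x hx, map_zero]
    · -- n = d
      rcases eq_or_lt_of_le hen with heq | hlt
      · -- e = d : the characteristic argument
        have hδx : δ x ∈ 𝒜 0 := by
          have h' := (hdeg n x hx).1 hen
          have h0 : n - e = 0 := by omega
          rwa [h0] at h'
        rw [hB0] at hδx
        obtain ⟨c, hc⟩ := Submodule.mem_span_singleton.mp hδx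
        have hc0 : c = 0 := by
          by_contra hc0
          -- x is nilpotent, with nilpotency index at most `finrank k B`
          set r := Module.finrank k B with hr
          have hnilr : x ^ r = 0 := by
            by_contra hxr
            have hnz : ∀ j : Fin (r + 1), x ^ (j : ℕ) ≠ 0 := by
              intro j hj
              apply hxr
              have : x ^ r = x ^ (j : ℕ) * x ^ (r - (j : ℕ)) := by
                rw [← pow_add]
                congr 1
                omega
              rw [this, hj, zero_mul]
            have hind : iSupIndep fun j : Fin (r + 1) => 𝒜 ((j : ℕ) • n) := by
              refine iSupIndep.comp ?_ ?_
              · exact (DirectSum.Decomposition.isInternal 𝒜).submodule_iSupIndep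
              · intro a b hab
                have : (a : ℕ) • n = (b : ℕ) • n := hab
                simp only [smul_eq_mul] at this
                exact Fin.ext (Nat.eq_of_mul_eq_mul_right hn0 this)
            have hli : LinearIndependent k fun j : Fin (r + 1) => x ^ (j : ℕ) :=
              hind.linearIndependent _ (fun j => SetLike.pow_mem_graded _ hx) hnz
            have := hli.fintype_card_le_finrank
            rw [Fintype.card_fin] at this
            omega
          have hex : ∃ N, x ^ N = 0 := ⟨r, hnilr⟩
          set N := Nat.find hex with hN
          have hNspec : x ^ N = 0 := Nat.find_spec hex
          have hN0 : N ≠ 0 := by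
            intro h
            rw [h, pow_zero] at hNspec
            exact one_ne_zero hNspec
          have hNle : N ≤ r := Nat.find_min' hex hnilr
          have hmin : x ^ (N - 1) ≠ 0 := Nat.find_min hex (by omega)
          have hle : (N : ℕ) • x ^ (N - 1) • δ x = 0 := by
            rw [← Derivation.leibniz_pow, hNspec, map_zero]
          rw [← hc] at hle
          have h2 : (N : k) • (c • x ^ (N - 1)) = 0 := by
            rw [Nat.cast_smul_eq_nsmul, ← hle, smul_eq_mul, mul_smul_comm, mul_one]
          have hNk : (N : k) ≠ 0 := by
            rcases hchar with h0 | hltc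
            · have hcp : CharP k 0 := h0 ▸ ringChar.charP k
              have : CharZero k := @CharP.charP_to_charZero k _ hcp
              exact Nat.cast_ne_zero.mpr hN0
            · intro hzero
              have hdvd : ringChar k ∣ N :=
                (CharP.cast_eq_zero_iff k (ringChar k) N).mp hzero
              have := Nat.le_of_dvd (Nat.pos_of_ne_zero hN0) hdvd
              omega
          rcases smul_eq_zero.mp h2 with h | h
          · exact hNk h
          rcases smul_eq_zero.mp h with h' | h'
          · exact hc0 h'
          · exact hmin h'
        rw [← hc, hc0, zero_smul]
      · -- e < d : δ x lands in a vanishing graded piece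
        have hδx : δ x ∈ 𝒜 (n - e) := (hdeg n x hx).1 hen
        rw [hsmall (n - e) (by omega) (by omega) _ hδx]
    · -- n > d : write x as a combination of products and use the IH
      have hq := claimC x (hpos n (by omega) x hx) n
      rw [DirectSum.decompose_of_mem_same 𝒜 hx] at hq
      refine Submodule.mul_induction_on hq ?_ ?_
      · intro z hz y hy
        rw [Derivation.leibniz, IH (n - d) (by omega) z hz, IH d h3 y hy,
          smul_zero, smul_zero, add_zero]
      · intro w1 w2 h1 h2
        rw [map_add, h1, h2, add_zero]
  -- conclude
  ext b
  conv_lhs => rw [← DirectSum.sum_support_decompose 𝒜 b]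
  rw [map_sum]
  simp only [Derivation.zero_apply]
  exact Finset.sum_eq_zero fun i _ => key i _ (SetLike.coe_mem _)
end

section
/- Let k be a field, p = char k, and q a positive integer with p ∤ q (or p = 0). Then there is no isomorphism φ of k[ε]/(ε^q)-algebras from k[x,ε]/(ε^q,(x+ε)^q) to k[x,ε]/(ε^q,x^q) which fixes ε, commutes with the augmentations sending x ↦ 0, and reduces to the identity of k[x]/(x^q) modulo ε. -/
open MvPolynomial TrivSqZeroExt

private lemma sq_zero_add_pow {R : Type*} [CommRing R] (v w : R) (hv : v * v = 0) :
    ∀ n : ℕ, (v + w) ^ (n + 1) = w ^ (n + 1) + (n + 1) * v * w ^ n := by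
  intro n
  induction n with
  | zero => push_cast; ring
  | succ m ih =>
    have : (v + w) ^ (m + 1 + 1) = (v + w) * (v + w) ^ (m + 1) := by ring
    rw [this, ih]
    push_cast
    linear_combination (((m : R) + 1) * w ^ m) * hv

/-- Abstract computation: if `e² = 0`, `w^q = 0`, `c·e = e + b·w` and `(e+b·w+w)^q = 0`
then `q·e·w^(q-1) = 0`. -/
private lemma aux_ring {T : Type*} [CommRing T] (e w c b : T) (q m : ℕ) (hm : q = m + 1)
    (he2 : e * e = 0) (hwq : w ^ q = 0) (hc : c * e = e + b * w)
    (hvw : (e + b * w + w) ^ q = 0) : (q : T) * e * w ^ m = 0 := by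
  have hv2 : (e + b * w) * (e + b * w) = 0 := by
    have h9 : (e + b * w) * (e + b * w) = c * c * (e * e) := by rw [← hc]; ring
    rw [h9, he2, mul_zero]
  have h7 := sq_zero_add_pow (e + b * w) w hv2 m
  rw [← hm, hvw, hwq] at h7
  have hww : w * w ^ m = 0 := by
    have : w * w ^ m = w ^ (m + 1) := (pow_succ' w m).symm
    rw [this, ← hm, hwq]
  have h5 : (0 : T) = (q : T) * (e + b * w) * w ^ m := by
    rw [hm]; push_cast; linear_combination h7
  linear_combination -h5 - (q : T) * b * hww

set_option maxHeartbeats 2000000 in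
set_option synthInstance.maxHeartbeats 400000 in
/-- Let `k` be a field and `q ≥ 2` an integer not divisible by
`char k` (in particular this covers `char k = 0`, since `0 ∤ q`).  Then there is no
`k`-algebra isomorphism `φ : k[x,ε]/(ε^q,(x+ε)^q) → k[x,ε]/(ε^q,x^q)` which fixes
`ε`, commutes with the augmentations sending `x ↦ 0` (i.e. `φ(x)` lies in the ideal
generated by `x`), and reduces to the identity of `k[x]/(x^q)` modulo `ε`
(i.e. `φ(x) - x` lies in the ideal generated by `ε`).
(Here `x = X 0`, `ε = X 1`.) -/
theorem stmt5 (k : Type*) [Field k] (q : ℕ) (hq : 2 ≤ q)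
    (hchar : ¬ (ringChar k ∣ q)) :
    ¬ ∃ φ :
        (MvPolynomial (Fin 2) k ⧸
          Ideal.span {((X 0 + X 1 : MvPolynomial (Fin 2) k)) ^ q, X 1 ^ q}) ≃ₐ[k]
        (MvPolynomial (Fin 2) k ⧸
          Ideal.span {(X 0 : MvPolynomial (Fin 2) k) ^ q, X 1 ^ q}),
      (φ (Ideal.Quotient.mk _ (X 1)) = Ideal.Quotient.mk _ (X 1)) ∧
      (φ (Ideal.Quotient.mk _ (X 0)) ∈
        Ideal.span {Ideal.Quotient.mk
          (Ideal.span {(X 0 : MvPolynomial (Fin 2) k) ^ q, X 1 ^ q}) (X 0)}) ∧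
      (φ (Ideal.Quotient.mk _ (X 0)) - Ideal.Quotient.mk _ (X 0) ∈
        Ideal.span {Ideal.Quotient.mk
          (Ideal.span {(X 0 : MvPolynomial (Fin 2) k) ^ q, X 1 ^ q}) (X 1)}) := by
  rintro ⟨φ, h1, h2, h3⟩
  have hq0 : (q : k) ≠ 0 := fun h => hchar ((ringChar.spec k q).1 h)
  obtain ⟨m, hm⟩ : ∃ m, q = m + 1 := ⟨q - 1, by omega⟩
  -- pass to the quotient by the bigger ideal (X₀², X₁^q)
  have hle : Ideal.span {(X 0 : MvPolynomial (Fin 2) k) ^ q, X 1 ^ q} ≤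
      Ideal.span {(X 0 : MvPolynomial (Fin 2) k) ^ 2, X 1 ^ q} := by
    rw [Ideal.span_le]
    rintro p hp
    simp only [Set.mem_insert_iff, Set.mem_singleton_iff] at hp
    rcases hp with rfl | rfl
    · obtain ⟨n, rfl⟩ : ∃ n, q = 2 + n := ⟨q - 2, by omega⟩
      rw [pow_add (X 0 : MvPolynomial (Fin 2) k) 2 n]
      exact Ideal.mul_mem_right _ _ (Ideal.subset_span (Set.mem_insert _ _))
    · exact Ideal.subset_span (Set.mem_insert_iff.2 (Or.inr rfl))
  set ψ := Ideal.Quotient.factor hle with hψ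
  have hψmk : ∀ p, ψ (Ideal.Quotient.mk _ p) = Ideal.Quotient.mk _ p :=
    fun p => Ideal.Quotient.factor_mk hle p
  set e := Ideal.Quotient.mk
    (Ideal.span {(X 0 : MvPolynomial (Fin 2) k) ^ 2, X 1 ^ q}) (X 0) with he
  set w := Ideal.Quotient.mk
    (Ideal.span {(X 0 : MvPolynomial (Fin 2) k) ^ 2, X 1 ^ q}) (X 1) with hw
  have he2 : e * e = 0 := by
    rw [he, ← map_mul, ← sq, Ideal.Quotient.eq_zero_iff_mem]
    exact Ideal.subset_span (Set.mem_insert _ _)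
  have hwq : w ^ q = 0 := by
    rw [hw, ← map_pow, Ideal.Quotient.eq_zero_iff_mem]
    exact Ideal.subset_span (Set.mem_insert_iff.2 (Or.inr rfl))
  set v := ψ (φ (Ideal.Quotient.mk _ (X 0))) with hv
  -- (v + w) ^ q = 0
  have hvw : (v + w) ^ q = 0 := by
    have h0 : Ideal.Quotient.mk
        (Ideal.span {((X 0 + X 1 : MvPolynomial (Fin 2) k)) ^ q, X 1 ^ q})
        ((X 0 + X 1) ^ q) = 0 := by
      rw [Ideal.Quotient.eq_zero_iff_mem]
      exact Ideal.subset_span (Set.mem_insert _ _)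
    rw [map_pow, map_add] at h0
    have h4 := congrArg ψ (congrArg φ h0)
    rw [map_pow, map_add, h1, map_pow, map_add, ← hv, hψmk, ← hw, map_zero, map_zero] at h4
    exact h4
  -- v = c * e
  obtain ⟨c, hc⟩ := Ideal.mem_span_singleton'.1 h2
  have hce : ψ c * e = v := by rw [hv, ← hc, map_mul, hψmk, he]
  -- v = e + (ψ b) * w
  obtain ⟨b, hb⟩ := Ideal.mem_span_singleton'.1 h3
  have hveb : v = e + ψ b * w := by
    have h6 := congrArg ψ hb
    rw [map_mul, map_sub, hψmk, hψmk, ← hv, ← he, ← hw] at h6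
    linear_combination -h6
  -- the key computation
  have key : (q : MvPolynomial (Fin 2) k ⧸
      Ideal.span {(X 0 : MvPolynomial (Fin 2) k) ^ 2, X 1 ^ q}) * e * w ^ m = 0 := by
    refine aux_ring e w (ψ c) (ψ b) q m hm he2 hwq ?_ ?_
    · rw [hce, hveb]
    · rw [← hveb, hvw]
  rw [he, hw, ← map_natCast (Ideal.Quotient.mk
        (Ideal.span {(X 0 : MvPolynomial (Fin 2) k) ^ 2, X 1 ^ q})) q,
      ← map_pow, ← map_mul, ← map_mul, Ideal.Quotient.eq_zero_iff_mem,
      Ideal.mem_span_pair] at key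
  obtain ⟨u, z, huz⟩ := key
  -- extract the coefficient of X₀·X₁^m
  have hcoeff := congrArg (coeff (Finsupp.single 0 1 + Finsupp.single 1 m)) huz
  have hXm : (X 0 : MvPolynomial (Fin 2) k) * X 1 ^ m =
      monomial (Finsupp.single 0 1 + Finsupp.single 1 m) 1 := by
    rw [← pow_one (X 0 : MvPolynomial (Fin 2) k), X_pow_eq_monomial, X_pow_eq_monomial,
      monomial_mul, one_mul]
  rw [coeff_add, X_pow_eq_monomial, X_pow_eq_monomial, coeff_mul_monomial',
    coeff_mul_monomial', ← map_natCast (C : k →+* MvPolynomial (Fin 2) k) q,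
    mul_assoc, hXm, coeff_C_mul, coeff_monomial, if_pos rfl,
    if_neg, if_neg, add_zero, mul_one] at hcoeff
  · exact hq0 hcoeff.symm
  · -- ¬ single 1 q ≤ single 0 1 + single 1 m
    intro hle1
    have := (Finsupp.single_le_iff).1 hle1
    simp [Finsupp.single_apply] at this
    omega
  · -- ¬ single 0 2 ≤ single 0 1 + single 1 m
    intro hle2
    have := (Finsupp.single_le_iff).1 hle2
    simp [Finsupp.single_apply] at this
end
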